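/- There exists a bipartite Arrow-Debreu market on I = I⁰ ⊎ I¹ and a pair of allocations (x⁰, x¹) such that: x⁰ and x¹ are proportional responses to each other, both satisfy the local maximin condition at every agent of their respective sides, yet the combined allocation x is not a market equilibrium — there exist no positive prices p ∈ ℝ^I satisfying both (i) p_i = Σ_j x_{j→i}·p_j for every agent i, and (ii) x_{j→i} > 0 only if j ∈ argmax_{k∈I} w_i(k)/p_k. -/

import Mathlib

open Finset

/-- Extended-real ratio with the convention `a/0 = +∞`. -/
noncomputable def ratioInf (a b : ℝ) : EReal :=
  if b = 0 then ⊤ else ((a / b : ℝ) : EReal)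

variable {A : Type*} [Fintype A]

/-- Utility of agent `k` under the allocation `x` (`x l k` is the fraction of good `l`
assigned to `k`), with valuations `w`. -/
noncomputable def util (w x : A → A → ℝ) (k : A) : ℝ := ∑ l, w k l * x l k

/-- `x` is a side-`ι` allocation: each agent of side `ι` completely distributes one unit
of its own good among the agents of the other side; all other entries vanish. -/
def SideAlloc (side : A → Bool) (ι : Bool) (x : A → A → ℝ) : Prop :=
  (∀ i j, 0 ≤ x i j) ∧
  (∀ i, side i ≠ ι → ∀ j, x i j = 0) ∧
  (∀ i j, side j = ι → x i j = 0) ∧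
  (∀ i, side i = ι → ∑ j, x i j = 1)

/-- The allocation `x` satisfies the local maximin condition at every agent of side `ι`:
`x i j > 0` only if `j` minimizes `u_k(x)/(w_k(i)·w_i(k))` over agents `k` of the other
side, with the convention `a/0 = +∞`. -/
def LocMaximin (side : A → Bool) (w : A → A → ℝ) (ι : Bool) (x : A → A → ℝ) : Prop :=
  ∀ i, side i = ι → ∀ j, 0 < x i j → ∀ k, side k ≠ ι →
    ratioInf (util w x j) (w j i * w i j) ≤ ratioInf (util w x k) (w k i * w i k)

/-- `y` is the proportional response to the side-`ι` allocation `x`: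
`y j i = w_j(i)·x_{i→j} / u_j(x)` for `j` of side `ι̅` and `i` of side `ι`. -/
def IsPRof (side : A → Bool) (w : A → A → ℝ) (ι : Bool) (x y : A → A → ℝ) : Prop :=
  (∀ j, side j = ι → ∀ i, y j i = 0) ∧
  (∀ j, side j ≠ ι → ∀ i, side i ≠ ι → y j i = 0) ∧
  (∀ j, side j ≠ ι → ∀ i, side i = ι → y j i = w j i * x i j / util w x j)

/-!
The market has two agents on each side, matched by the involution `σ = (0 2)(1 3)`, and each
agent gives its whole good to its partner. Agents `2` and `3` value only their partner's good,
so partners are the only pairs of positive mutual value; this makes both halves of the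
allocation locally maximin and proportional responses to each other. But agents `0` and `1`
each receive the good they value less: if both spent on best-ratio goods, multiplying their two
ratio inequalities would give `w 0 3 * w 1 2 ≤ w 0 2 * w 1 3`, that is `4 ≤ 1`.
-/

lemma ratioInf_zero_right (a : ℝ) : ratioInf a 0 = ⊤ := if_pos rfl

def matchAlloc {α : Type*} [DecidableEq α] (side : α → Bool) (ι : Bool) (σ : α → α) :
    α → α → ℝ :=
  fun i j => if side i = ι ∧ j = σ i then 1 else 0

lemma eq_of_matchAlloc_add_matchAlloc_pos {α : Type*} [DecidableEq α] {side : α → Bool}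
    {ι ι' : Bool} {σ : α → α} {i j : α}
    (h : 0 < matchAlloc side ι σ i j + matchAlloc side ι' σ i j) : j = σ i := by
  by_contra hj
  simp [matchAlloc, hj] at h

section Matching

variable [DecidableEq A] {side : A → Bool} {σ : A → A}

lemma sideAlloc_matchAlloc (hσ : ∀ i, side (σ i) ≠ side i) (ι : Bool) :
    SideAlloc side ι (matchAlloc side ι σ) := by
  refine ⟨fun i j => ?_, fun i hi j => ?_, fun i j hj => ?_, fun i hi => ?_⟩
  · unfold matchAlloc; split_ifs <;> norm_num
  · simp [matchAlloc, hi]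
  · have : ¬(side i = ι ∧ j = σ i) := by
      rintro ⟨hi, rfl⟩
      exact hσ i (hj.trans hi.symm)
    simp [matchAlloc, this]
  · simp [matchAlloc, hi]

lemma util_matchAlloc (hσ : Function.Involutive σ) (w : A → A → ℝ) (ι : Bool) (j : A) :
    util w (matchAlloc side ι σ) j = if side (σ j) = ι then w j (σ j) else 0 := by
  have hpartner : ∀ l, (j = σ l) ↔ (l = σ j) :=
    fun l => ⟨fun h => h ▸ (hσ l).symm, fun h => h ▸ (hσ j).symm⟩
  simp only [util, matchAlloc, hpartner, mul_ite, mul_one, mul_zero]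
  rw [Finset.sum_eq_single (σ j) (fun l _ hl => if_neg (fun h => hl h.2)) (by simp)]
  simp

lemma isPRof_matchAlloc (hσ : Function.Involutive σ) (hside : ∀ i, side (σ i) ≠ side i)
    {w : A → A → ℝ} (hw : ∀ i, w i (σ i) ≠ 0) (ι : Bool) :
    IsPRof side w ι (matchAlloc side ι σ) (matchAlloc side (!ι) σ) := by
  have partner_side : ∀ j, side j ≠ ι → side (σ j) = ι := fun j hj => by
    rw [Bool.eq_not_iff.2 (hside j), Bool.eq_not_iff.2 hj, Bool.not_not]
  refine ⟨fun j hj i => ?_, fun j hj i hi => ?_, fun j hj i hi => ?_⟩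
  · simp [matchAlloc, hj]
  · have : i ≠ σ j := by rintro rfl; exact hi (partner_side j hj)
    simp [matchAlloc, this]
  · have hj' : side j = !ι := Bool.eq_not_iff.2 hj
    have hpartner : (j = σ i) ↔ (i = σ j) :=
      ⟨fun h => h ▸ (hσ i).symm, fun h => h ▸ (hσ j).symm⟩
    rw [util_matchAlloc hσ, if_pos (partner_side j hj)]
    by_cases hij : i = σ j
    · subst hij; simp [matchAlloc, hj', hi, hσ j, hw j]
    · simp [matchAlloc, hj', hi, hpartner, hij]

end Matching

lemma locMaximin_of_supported_on_partner {side : A → Bool} {w : A → A → ℝ} {ι : Bool}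
    {x : A → A → ℝ} {σ : A → A} (hx : ∀ i j, 0 < x i j → j = σ i)
    (hw : ∀ i k, k ≠ σ i → w k i * w i k = 0) : LocMaximin side w ι x := by
  intro i _ j hj k _
  obtain rfl := hx i j hj
  by_cases hk : k = σ i
  · rw [hk]
  · rw [hw i k hk, ratioInf_zero_right]
    exact le_top

lemma mul_le_mul_of_best_ratio {α : Type*} {w : α → α → ℝ} (hw : ∀ a b, 0 ≤ w a b)
    {p : α → ℝ} (hp : ∀ a, 0 < p a) {i i' j j' : α}
    (hi : ∀ k, w i k / p k ≤ w i j / p j) (hi' : ∀ k, w i' k / p k ≤ w i' j' / p j') :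
    w i j' * w i' j ≤ w i j * w i' j' := by
  have h := mul_le_mul (hi j') (hi' j) (div_nonneg (hw i' j) (hp j).le)
    (div_nonneg (hw i j) (hp j).le)
  have hpp : 0 < p j * p j' := mul_pos (hp j) (hp j')
  rw [div_mul_div_comm, div_mul_div_comm, mul_comm (p j') (p j)] at h
  exact (div_le_div_iff_of_pos_right hpp).1 h

def exampleSide : Fin 4 → Bool := ![false, false, true, true]

def examplePartner : Fin 4 → Fin 4 := ![2, 3, 0, 1]

def exampleValuation : Fin 4 → Fin 4 → ℝ :=
  ![![0, 0, 1, 2],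
    ![0, 0, 2, 1],
    ![1, 0, 0, 0],
    ![0, 1, 0, 0]]

lemma examplePartner_involutive : Function.Involutive examplePartner := by
  intro i; fin_cases i <;> rfl

lemma exampleSide_partner (i : Fin 4) : exampleSide (examplePartner i) ≠ exampleSide i := by
  fin_cases i <;> decide

lemma exampleValuation_nonneg (i j : Fin 4) : 0 ≤ exampleValuation i j := by
  fin_cases i <;> fin_cases j <;> simp [exampleValuation]

lemma exampleValuation_eq_zero_of_side_eq (i j : Fin 4) (h : exampleSide i = exampleSide j) :
    exampleValuation i j = 0 := by
  fin_cases i <;> fin_cases j <;> simp_all [exampleValuation, exampleSide]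

lemma exampleValuation_partner_ne_zero (i : Fin 4) :
    exampleValuation i (examplePartner i) ≠ 0 := by
  fin_cases i <;> simp [exampleValuation, examplePartner]

lemma exampleValuation_mul_eq_zero (i k : Fin 4) (hk : k ≠ examplePartner i) :
    exampleValuation k i * exampleValuation i k = 0 := by
  fin_cases i <;> fin_cases k <;> simp_all [exampleValuation, examplePartner]

/-- **A locally maximin allocation need not be an equilibrium in Arrow-Debreu markets.**
There is a bipartite Arrow-Debreu market and a pair of allocations `(x0, x1)` that are
proportional responses to each other and locally maximin at every agent of their respective
sides, yet the combined allocation is not a market equilibrium: no positive prices `p`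
satisfy both `p_i = Σ_j x_{j→i}·p_j` for every `i` and the best-ratio spending condition. -/
theorem locally_maximin_not_equilibrium_in_AD :
    ∃ (n : ℕ) (side : Fin n → Bool) (w x0 x1 : Fin n → Fin n → ℝ),
      (∀ i j, 0 ≤ w i j) ∧
      (∀ i j, side i = side j → w i j = 0) ∧
      SideAlloc side false x0 ∧ SideAlloc side true x1 ∧
      IsPRof side w false x0 x1 ∧ IsPRof side w true x1 x0 ∧
      LocMaximin side w false (fun l m => x0 l m + x1 l m) ∧
      LocMaximin side w true (fun l m => x0 l m + x1 l m) ∧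
      ¬ ∃ p : Fin n → ℝ, (∀ i, 0 < p i) ∧
          (∀ i, p i = ∑ j, (x0 j i + x1 j i) * p j) ∧
          (∀ i j, 0 < x0 j i + x1 j i → ∀ k, w i k / p k ≤ w i j / p j) := by
  set x0 := matchAlloc exampleSide false examplePartner
  set x1 := matchAlloc exampleSide true examplePartner
  have hsupp : ∀ i j, 0 < x0 i j + x1 i j → j = examplePartner i :=
    fun _ _ => eq_of_matchAlloc_add_matchAlloc_pos
  have hPR := isPRof_matchAlloc examplePartner_involutive exampleSide_partner
    exampleValuation_partner_ne_zero
  refine ⟨4, exampleSide, exampleValuation, x0, x1,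
    exampleValuation_nonneg, exampleValuation_eq_zero_of_side_eq,
    sideAlloc_matchAlloc exampleSide_partner false, sideAlloc_matchAlloc exampleSide_partner true,
    hPR false, hPR true,
    locMaximin_of_supported_on_partner hsupp exampleValuation_mul_eq_zero,
    locMaximin_of_supported_on_partner hsupp exampleValuation_mul_eq_zero, ?_⟩
  rintro ⟨p, hp, -, hbest⟩
  have hswap := mul_le_mul_of_best_ratio exampleValuation_nonneg hp
    (hbest 0 2 (by simp [x0, x1, matchAlloc, exampleSide, examplePartner]))
    (hbest 1 3 (by simp [x0, x1, matchAlloc, exampleSide, examplePartner]))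
  simp [exampleValuation] at hswap
  norm_num at hswap
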